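/- For t ∈ {+,-}^n with the - at position l surviving in the reduced form of (t_l,...,t_n), let p > l be minimal with t_p = + (assuming such p exists, so t_{l+1} = ... = t_{p-1} = -). Then p - l > 1 + h₊(t_{p+1},...,t_n) and h₋^l(t) = (p - l - 1) - h₊(t_{p+1},...,t_n) + h₋(t_{p+1},...,t_n). -/

import Mathlib

-- Signs: `true` encodes `+`, `false` encodes `-`.  In reduced forms, `none` encodes `0`.

/-- Replace the first surviving `+` (i.e. first `some true`) by `0` (i.e. `none`). -/
def zapPlus : List (Option Bool) → List (Option Bool)
  | [] => []
  | some true :: r => none :: r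
  | y :: r => y :: zapPlus r

/-- The reduced form `t^red` of a sign sequence `t ∈ {+,-}ⁿ`: repeatedly cancel pairs
`(t_a, t_b) = (-, +)` with `a < b` and only `0`'s strictly in between, replacing both
entries by `0`, until no `+` appears to the right of a `-`. -/
def red : List Bool → List (Option Bool)
  | [] => []
  | x :: s =>
    let r := red s
    if x then some true :: r
    else if r.any (· == some true) then none :: zapPlus r
    else some false :: r

/-- `h₊(t)`: the number of `+`'s in the reduced form of `t`. -/
def hp (t : List Bool) : ℕ := (red t).count (some true)

/-- `h₋(t)`: the number of `-`'s in the reduced form of `t`. -/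
def hm (t : List Bool) : ℕ := (red t).count (some false)

/-- The weight `wt(t) = h₋(t) - h₊(t)`. -/
def wt (t : List Bool) : ℤ := (hm t : ℤ) - (hp t : ℤ)

/-- The largest index `i` with `t^red_i = +`, if it exists. -/
def eIdx (t : List Bool) : Option ℕ :=
  ((List.range t.length).filter (fun i => (red t)[i]? == some (some true))).getLast?

/-- The smallest index `j` with `t^red_j = -`, if it exists. -/
def fIdx (t : List Bool) : Option ℕ :=
  ((List.range t.length).filter (fun i => (red t)[i]? == some (some false))).head?

/-- The crystal operator `ẽ`: flip the rightmost surviving `+` to `-` (or `0` = `none`). -/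
def etilde (t : List Bool) : Option (List Bool) :=
  (eIdx t).map (fun i => t.set i false)

/-- The crystal operator `f̃`: flip the leftmost surviving `-` to `+` (or `0` = `none`). -/
def ftilde (t : List Bool) : Option (List Bool) :=
  (fIdx t).map (fun i => t.set i true)

/-- The order `≻` on `{+,-}ⁿ`: `t' ≻ t` iff there is an index `i` such that
`t'_j = t_j` for all `j > i`, while `t'_i = -` and `t_i = +`. -/
def succOrd (t' t : List Bool) : Prop :=
  ∃ i : ℕ, (∀ j, i < j → t'[j]? = t[j]?) ∧ t'[i]? = some false ∧ t[i]? = some true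

/-!
Read from right to left, each `-` cancels the nearest surviving `+` to its right if there is
one, and survives otherwise; so `k` minus signs in front of `u` use up `min k h₊(u)` of its
pluses. Here `t_l … t_n = - (-)^(p-l-1) + s`, and the `-` at `l` survives exactly when the
`p - l - 1` minus signs after it already use up all `h₊(s) + 1` pluses of `+ s`; the ones left
over survive, together with those of `s`.
-/

lemma zapPlus_count_some_false (r : List (Option Bool)) :
    (zapPlus r).count (some false) = r.count (some false) := by
  induction r with
  | nil => rfl
  | cons x r ih => rcases x with _ | _ | _ <;> simp [zapPlus, ih]

lemma zapPlus_count_some_true (r : List (Option Bool)) :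
    (zapPlus r).count (some true) = r.count (some true) - 1 := by
  induction r with
  | nil => rfl
  | cons x r ih =>
    rcases x with _ | _ | _ <;> simp [zapPlus, ih]

lemma any_beq_some_true_iff (r : List (Option Bool)) :
    r.any (· == some true) = true ↔ 0 < r.count (some true) := by
  simp [List.count_pos_iff]

lemma red_false_cons (s : List Bool) :
    red (false :: s) =
      if 0 < hp s then none :: zapPlus (red s) else some false :: red s := by
  simp only [red, hp, Bool.false_eq_true, if_false, any_beq_some_true_iff]
  congr 1

lemma hp_true_cons (s : List Bool) : hp (true :: s) = hp s + 1 := by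
  simp [hp, red]

lemma hm_true_cons (s : List Bool) : hm (true :: s) = hm s := by
  simp [hm, red]

lemma hp_false_cons (s : List Bool) : hp (false :: s) = hp s - 1 := by
  rw [hp, red_false_cons]
  split_ifs with h
  · rw [List.count_cons, zapPlus_count_some_true, hp]
    simp
  · rw [List.count_cons, hp]
    simp only [hp] at h
    simp
    omega

lemma hm_false_cons (s : List Bool) : hm (false :: s) = hm s + (1 - hp s) := by
  rw [hm, red_false_cons]
  split_ifs with h
  · rw [List.count_cons, zapPlus_count_some_false, hm]
    simp
    omega
  · rw [List.count_cons, hm]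
    simp
    omega

lemma red_cons_head_eq_some_false_iff (x : Bool) (s : List Bool) :
    (red (x :: s))[0]? = some (some false) ↔ x = false ∧ hp s = 0 := by
  cases x
  · rw [red_false_cons]; split_ifs with h <;> simp <;> omega
  · simp [red]

lemma hp_replicate_false_append (k : ℕ) (u : List Bool) :
    hp (List.replicate k false ++ u) = hp u - k := by
  induction k with
  | zero => simp
  | succ k ih => rw [List.replicate_succ, List.cons_append, hp_false_cons, ih]; omega

lemma hm_replicate_false_append (k : ℕ) (u : List Bool) :
    hm (List.replicate k false ++ u) = hm u + (k - hp u) := by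
  induction k with
  | zero => simp
  | succ k ih =>
    rw [List.replicate_succ, List.cons_append, hm_false_cons, ih, hp_replicate_false_append]
    omega

lemma List.drop_eq_replicate_append_drop {α : Type*} (t : List α) (a : α) {l p : ℕ}
    (hlp : l ≤ p) (h : ∀ q, l ≤ q → q < p → t[q]? = some a) :
    t.drop l = List.replicate (p - l) a ++ t.drop p := by
  refine List.ext_getElem? fun i => ?_
  rw [List.getElem?_drop, List.getElem?_append, List.length_replicate]
  split_ifs with hi
  · rw [List.getElem?_replicate_of_lt hi, h _ (by omega) (by omega)]
  · rw [List.getElem?_drop]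
    congr 1
    omega

/-- If the `-` at position `l` of `t` survives in the reduced form of `(t_l, ..., t_n)`,
and `p > l` is minimal with `t_p = +` (so `t_{l+1} = ... = t_{p-1} = -`), then
`p - l > 1 + h₊(t_{p+1},...,t_n)` and
`h₋^l(t) = (p - l - 1) - h₊(t_{p+1},...,t_n) + h₋(t_{p+1},...,t_n)`
(the latter stated additively to avoid truncated subtraction). -/
theorem hm_formula (t : List Bool) (l p : ℕ) (hlp : l < p) (hpn : p < t.length)
    (htp : t[p]? = some true)
    (hbetween : ∀ q, l < q → q < p → t[q]? = some false)
    (hsurv : (red (t.drop l))[0]? = some (some false)) :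
    1 + hp (t.drop (p + 1)) < p - l ∧
    hm (t.drop l) + hp (t.drop (p + 1)) = (p - l - 1) + hm (t.drop (p + 1)) := by
  set s := t.drop (p + 1)
  have hdrop_p : t.drop p = true :: s := by
    rw [List.drop_eq_getElem_cons hpn, (List.getElem?_eq_some_iff.mp htp).2]
  have hdrop_l : t.drop l = t[l] :: (List.replicate (p - l - 1) false ++ true :: s) := by
    rw [List.drop_eq_getElem_cons (by omega), ← hdrop_p,
      List.drop_eq_replicate_append_drop t false (by omega) hbetween]
    congr 3
  rw [hdrop_l, red_cons_head_eq_some_false_iff, hp_replicate_false_append, hp_true_cons] at hsurv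
  obtain ⟨hl_minus, hsurv⟩ := hsurv
  rw [hdrop_l, hl_minus, hm_false_cons, hm_replicate_false_append, hp_replicate_false_append,
    hm_true_cons, hp_true_cons]
  omega
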